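/- arXiv:1106.2680 — 2 statements merged into one kernel-verified Lean document; each statement's English description precedes it below -/
import Mathlib

section
/- For every z ∈ Z, the F-linear map φ_z : V → V defined by φ_z(a,b) = (za, zb) is a ½-derivation of V = V_{1/2}(Z,D), i.e. φ_z(x·y) = ½(φ_z(x)·y + x·φ_z(y)) for all x, y ∈ V. Moreover, φ_z belongs to the centroid of V if and only if D(z) = 0; hence for z ∉ F·1, φ_z is a nontrivial ½-derivation of V. -/
/-!
Multiplication by `z` commutes with the product of `V_{1/2}(Z,D)` up to the terms `D(z)·(…)`
coming from the Leibniz rule; in `φ_z(x)·y + x·φ_z(y)` these terms cancel, which gives the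
½-derivation identity. In the centroid condition they survive: testing it on `x = y = (0,1)`
leaves exactly `D z = 0`, and conversely `D z = 0` makes multiplication by `z` commute with `D`.
-/

/-- The product of the Jordan superalgebra `V_{1/2}(Z,D)` on `Z × Z`
(even part `Z × 0`, odd part `0 × Z`):
`(a,b)·(c,d) = (ac + D(b)d − bD(d), (1/2)(ad + bc))`. -/
def vmul {F : Type*} [Field F] {Z : Type*} [CommRing Z] [Algebra F Z]
    (D : Z →ₗ[F] Z) (x y : Z × Z) : Z × Z :=
  (x.1 * y.1 + D x.2 * y.2 - x.2 * D y.2, (1 / 2 : F) • (x.1 * y.2 + x.2 * y.1))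

/-- `φ` is an odd `δ`-superderivation of `V_{1/2}(Z,D)`: it interchanges the even and the
odd part, and for homogeneous `x, y` it satisfies
`φ(x·y) = δ(φ(x)·y + (−1)^{p(x)} x·φ(y))`. -/
def IsOddSuperDer {F : Type*} [Field F] {Z : Type*} [CommRing Z] [Algebra F Z]
    (D : Z →ₗ[F] Z) (δ : F) (φ : Z × Z → Z × Z) : Prop :=
  (∀ a : Z, (φ (a, 0)).1 = 0) ∧ (∀ b : Z, (φ (0, b)).2 = 0) ∧
  (∀ x y : Z × Z, x.2 = 0 → (y.1 = 0 ∨ y.2 = 0) →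
    φ (vmul D x y) = δ • (vmul D (φ x) y + vmul D x (φ y))) ∧
  (∀ x y : Z × Z, x.1 = 0 → (y.1 = 0 ∨ y.2 = 0) →
    φ (vmul D x y) = δ • (vmul D (φ x) y - vmul D x (φ y)))

/-- `χ` lies in the centroid of `V_{1/2}(Z,D)`:
`χ(x·y) = χ(x)·y = x·χ(y)` for all `x, y`. -/
def InCentroid {F : Type*} [Field F] {Z : Type*} [CommRing Z] [Algebra F Z]
    (D : Z →ₗ[F] Z) (χ : Z × Z → Z × Z) : Prop :=
  ∀ x y : Z × Z, χ (vmul D x y) = vmul D (χ x) y ∧ χ (vmul D x y) = vmul D x (χ y)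

/-- `χ` lies in the odd part of the supercentroid of `V_{1/2}(Z,D)`: it is odd and
`χ(x·y) = χ(x)·y = (−1)^{p(x)} x·χ(y)` for all homogeneous `x, y`. -/
def InOddSupercentroid {F : Type*} [Field F] {Z : Type*} [CommRing Z] [Algebra F Z]
    (D : Z →ₗ[F] Z) (χ : Z × Z → Z × Z) : Prop :=
  (∀ a : Z, (χ (a, 0)).1 = 0) ∧ (∀ b : Z, (χ (0, b)).2 = 0) ∧
  (∀ x y : Z × Z, (x.1 = 0 ∨ x.2 = 0) → (y.1 = 0 ∨ y.2 = 0) →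
    χ (vmul D x y) = vmul D (χ x) y) ∧
  (∀ x y : Z × Z, x.2 = 0 → (y.1 = 0 ∨ y.2 = 0) →
    χ (vmul D x y) = vmul D x (χ y)) ∧
  (∀ x y : Z × Z, x.1 = 0 → (y.1 = 0 ∨ y.2 = 0) →
    χ (vmul D x y) = - vmul D x (χ y))

section

variable {F : Type*} [Field F] {Z : Type*} [CommRing Z] [Algebra F Z]

theorem half_smul_two_mul (h2 : (2 : F) ≠ 0) (w : Z) : (1 / 2 : F) • (2 * w) = w := by
  rw [two_mul, ← two_smul F, smul_smul, one_div, inv_mul_cancel₀ h2, one_smul]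

variable (D : Z →ₗ[F] Z)

theorem map_one_eq_zero_of_leibniz (hD : ∀ a b : Z, D (a * b) = D a * b + a * D b) :
    D 1 = 0 := by
  simpa using hD 1 1

theorem vmul_mul_left_add_vmul_mul_left (hD : ∀ a b : Z, D (a * b) = D a * b + a * D b)
    (z : Z) (x y : Z × Z) :
    vmul D (z * x.1, z * x.2) y + vmul D x (z * y.1, z * y.2) =
      (2 * (z * (vmul D x y).1), 2 * (z * (vmul D x y).2)) := by
  simp only [vmul, Prod.mk_add_mk, hD, Prod.mk.injEq]
  constructor
  · ring
  · simp only [Algebra.smul_def]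
    ring

theorem inCentroid_mul_left_of_map_eq_zero (hD : ∀ a b : Z, D (a * b) = D a * b + a * D b)
    {z : Z} (hz : D z = 0) : InCentroid D (fun v : Z × Z => (z * v.1, z * v.2)) := by
  have hDz : ∀ b : Z, D (z * b) = z * D b := fun b => by rw [hD, hz, zero_mul, zero_add]
  rintro ⟨a, b⟩ ⟨c, d⟩
  refine ⟨?_, ?_⟩ <;>
  · simp only [vmul, Prod.mk.injEq, hDz, Algebra.smul_def]
    constructor <;> ring

theorem map_eq_zero_of_inCentroid_mul_left (hD : ∀ a b : Z, D (a * b) = D a * b + a * D b)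
    {z : Z} (hz : InCentroid D (fun v : Z × Z => (z * v.1, z * v.2))) : D z = 0 := by
  have h := congrArg Prod.fst (hz (0, 1) (0, 1)).1
  simpa [vmul, map_one_eq_zero_of_leibniz D hD] using h.symm

end

theorem mul_by_z_is_half_derivation_general
    {F : Type*} [Field F] (h2 : (2 : F) ≠ 0)
    {Z : Type*} [CommRing Z] [Algebra F Z]
(D : Z →ₗ[F] Z)
    (hD : ∀ a b : Z, D (a * b) = D a * b + a * D b)
    (hker : ∀ a : Z, D a = 0 → ∃ c : F, a = algebraMap F Z c)
    (z : Z) :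
    (∀ x y : Z × Z,
      (fun v : Z × Z => (z * v.1, z * v.2)) (vmul D x y) =
        (1 / 2 : F) • (vmul D (z * x.1, z * x.2) y + vmul D x (z * y.1, z * y.2))) ∧
    (InCentroid D (fun v : Z × Z => (z * v.1, z * v.2)) ↔ D z = 0) ∧
    ((∀ c : F, z ≠ algebraMap F Z c) →
      ¬ InCentroid D (fun v : Z × Z => (z * v.1, z * v.2))) := by
  have hcentroid : InCentroid D (fun v : Z × Z => (z * v.1, z * v.2)) ↔ D z = 0 :=
    ⟨map_eq_zero_of_inCentroid_mul_left D hD, inCentroid_mul_left_of_map_eq_zero D hD⟩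
  refine ⟨fun x y => ?_, hcentroid, fun hz hcen => ?_⟩
  · rw [vmul_mul_left_add_vmul_mul_left D hD, Prod.smul_mk, half_smul_two_mul h2,
      half_smul_two_mul h2]
  · obtain ⟨c, rfl⟩ := hker z (hcentroid.1 hcen)
    exact hz c rfl

/-- (char F ≠ 2)  For every `z ∈ Z` the map `φ_z(a,b) = (za, zb)` is a ½-derivation of
`V_{1/2}(Z,D)`; it lies in the centroid iff `D z = 0`; hence for `z ∉ F·1` it is a
nontrivial ½-derivation. -/
theorem mul_by_z_is_half_derivation
    {F : Type*} [Field F] (h2 : (2 : F) ≠ 0)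
    {Z : Type*} [CommRing Z] [Algebra F Z]
(D : Z →ₗ[F] Z)
    (hD : ∀ a b : Z, D (a * b) = D a * b + a * D b)
    (hD0 : D ≠ 0)
    (hsimple : ∀ I : Ideal Z, (∀ x ∈ I, D x ∈ I) → I = ⊥ ∨ I = ⊤)
    (hker : ∀ a : Z, D a = 0 → ∃ c : F, a = algebraMap F Z c)
    (z : Z) :
    (∀ x y : Z × Z,
      (fun v : Z × Z => (z * v.1, z * v.2)) (vmul D x y) =
        (1 / 2 : F) • (vmul D (z * x.1, z * x.2) y + vmul D x (z * y.1, z * y.2))) ∧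
    (InCentroid D (fun v : Z × Z => (z * v.1, z * v.2)) ↔ D z = 0) ∧
    ((∀ c : F, z ≠ algebraMap F Z c) →
      ¬ InCentroid D (fun v : Z × Z => (z * v.1, z * v.2))) :=
  mul_by_z_is_half_derivation_general h2 D hD hker z
end

section
/- Assume the characteristic of F is not 2 and not 3 (possibly 0). Then every 2-derivation of V = V_{1/2}(Z,D) is zero, i.e. the only F-linear map φ : V → V with φ(x·y) = 2(φ(x)·y + x·φ(y)) for all x, y ∈ V is φ = 0. -/
/-!
Let `e = (1, 0)`. Left multiplication by `e` is the identity on the even part `Z × 0` and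
multiplication by `1/2` on the odd part `0 × Z`. For a 2-derivation `φ`, `φ e = φ (e·e) = 4 e·φ e`,
and since `4` and `2` differ from `1` (char `F ≠ 2, 3`) this forces `φ e = 0`. Then
`φ (e·y) = 2 e·φ y`: an odd `y` is sent to an eigenvector of eigenvalue `1/4`, hence to `0`, and an
even `y` is sent into the odd part. Finally, for `q = (φ (a, 0)).2`, applying `φ` to the odd
product `(a, 0)·(0, d)` gives `D q * d = q * D d` for all `d`, so `q` is a constant killing `D`,
i.e. `q = 0`.
-/

def IsDeltaDerivation {F : Type*} [Field F] {Z : Type*} [CommRing Z] [Algebra F Z]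
    (D : Z →ₗ[F] Z) (δ : F) (φ : Z × Z →ₗ[F] Z × Z) : Prop :=
  ∀ x y : Z × Z, φ (vmul D x y) = δ • (vmul D (φ x) y + vmul D x (φ y))

lemma eq_zero_of_smul_eq_smul (F : Type*) {M : Type*} [Field F] [AddCommGroup M] [Module F M]
    {c d : F} {z : M} (h : c • z = d • z) (hcd : c ≠ d) : z = 0 := by
  by_contra hz
  exact hcd (smul_left_injective F hz h)

section VHalf

variable {F : Type*} [Field F] {Z : Type*} [CommRing Z] [Algebra F Z] (D : Z →ₗ[F] Z)

@[simp]
lemma vmul_zero_left (x : Z × Z) : vmul D 0 x = 0 := by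
  simp [vmul]

@[simp]
lemma vmul_zero_right (x : Z × Z) : vmul D x 0 = 0 := by
  simp [vmul]

@[simp]
lemma vmul_one_zero_left (x : Z × Z) : vmul D (1, 0) x = (x.1, (1 / 2 : F) • x.2) := by
  simp [vmul]

@[simp]
lemma vmul_one_zero_right (x : Z × Z) : vmul D x (1, 0) = (x.1, (1 / 2 : F) • x.2) := by
  simp [vmul]

@[simp]
lemma vmul_even_odd (a d : Z) : vmul D (a, 0) (0, d) = (1 / 2 : F) • (0, a * d) := by
  simp [vmul, Prod.smul_mk]

@[simp]
lemma vmul_odd_odd (b d : Z) : vmul D (0, b) (0, d) = (D b * d - b * D d, 0) := by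
  simp [vmul]

lemma eq_zero_of_forall_deriv_mul_eq_mul_deriv
    (hD : ∀ a b : Z, D (a * b) = D a * b + a * D b) (hD0 : D ≠ 0)
    (hker : ∀ a : Z, D a = 0 → ∃ c : F, a = algebraMap F Z c)
    {q : Z} (hq : ∀ d : Z, D q * d = q * D d) : q = 0 := by
  have hD1 : D 1 = 0 := by simpa using hD 1 1
  have hDq : D q = 0 := by simpa [hD1] using hq 1
  obtain ⟨c, rfl⟩ := hker q hDq
  obtain ⟨d, hd⟩ : ∃ d, D d ≠ 0 := by
    by_contra! h
    exact hD0 (LinearMap.ext h)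
  have hcd : c • D d = 0 := by simpa [hDq, Algebra.smul_def] using (hq d).symm
  simp [(smul_eq_zero.mp hcd).resolve_right hd]

namespace IsDeltaDerivation

variable {D} {φ : Z × Z →ₗ[F] Z × Z} (hφ : IsDeltaDerivation D 2 φ)
include hφ

lemma map_one_zero (h2 : (2 : F) ≠ 0) (h3 : (3 : F) ≠ 0) : φ (1, 0) = 0 := by
  have h := hφ (1, 0) (1, 0)
  simp only [vmul_one_zero_left, smul_zero, vmul_one_zero_right] at h
  obtain ⟨h₁, h₂⟩ := Prod.ext_iff.mp h
  simp only [Prod.smul_fst, Prod.smul_snd, ← two_smul F, smul_smul] at h₁ h₂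
  exact Prod.ext (eq_zero_of_smul_eq_smul F ((one_smul F _).trans h₁) (by grind))
    (eq_zero_of_smul_eq_smul F ((one_smul F _).trans h₂) (by grind))

lemma map_vmul_one_zero_left (he : φ (1, 0) = 0) (y : Z × Z) :
    φ (vmul D (1, 0) y) = (2 : F) • vmul D (1, 0) (φ y) := by
  rw [hφ, he, vmul_zero_left, zero_add]

lemma map_odd (h2 : (2 : F) ≠ 0) (h3 : (3 : F) ≠ 0) (b : Z) : φ (0, b) = 0 := by
  have h := hφ.map_vmul_one_zero_left (hφ.map_one_zero h2 h3) (0, b)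
  rw [show vmul D (1, 0) (0, b) = (1 / 2 : F) • (0, b) by simp, map_smul] at h
  obtain ⟨h₁, h₂⟩ := Prod.ext_iff.mp h
  simp only [Prod.smul_fst, Prod.smul_snd, vmul_one_zero_left, smul_smul] at h₁ h₂
  exact Prod.ext (eq_zero_of_smul_eq_smul F h₁ (by grind))
    (eq_zero_of_smul_eq_smul F h₂ (by grind))

lemma fst_map_even (h2 : (2 : F) ≠ 0) (h3 : (3 : F) ≠ 0) (a : Z) : (φ (a, 0)).1 = 0 := by
  have h := congrArg Prod.fst (hφ.map_vmul_one_zero_left (hφ.map_one_zero h2 h3) (a, 0))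
  simp only [vmul_one_zero_left, smul_zero, Prod.smul_fst] at h
  exact eq_zero_of_smul_eq_smul F ((one_smul F _).trans h) (by grind)

lemma deriv_mul_eq_mul_deriv_snd_map_even (h2 : (2 : F) ≠ 0) (h3 : (3 : F) ≠ 0) (a d : Z) :
    D (φ (a, 0)).2 * d = (φ (a, 0)).2 * D d := by
  have h := hφ (a, 0) (0, d)
  rw [show φ (a, 0) = (0, (φ (a, 0)).2) from Prod.ext (hφ.fst_map_even h2 h3 a) rfl] at h
  simp only [vmul_even_odd, map_smul, hφ.map_odd h2 h3, smul_zero, vmul_odd_odd,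
    vmul_zero_right, add_zero] at h
  have h₁ := congrArg Prod.fst h
  simp only [Prod.fst_zero, Prod.smul_fst] at h₁
  exact sub_eq_zero.mp ((smul_eq_zero.mp h₁.symm).resolve_left h2)

lemma map_even (h2 : (2 : F) ≠ 0) (h3 : (3 : F) ≠ 0)
    (hD : ∀ a b : Z, D (a * b) = D a * b + a * D b) (hD0 : D ≠ 0)
    (hker : ∀ a : Z, D a = 0 → ∃ c : F, a = algebraMap F Z c) (a : Z) : φ (a, 0) = 0 :=
  Prod.ext (hφ.fst_map_even h2 h3 a) <| eq_zero_of_forall_deriv_mul_eq_mul_deriv D hD hD0 hker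
    (hφ.deriv_mul_eq_mul_deriv_snd_map_even h2 h3 a)

end IsDeltaDerivation

end VHalf

theorem two_derivation_of_V_is_zero_general
    {F : Type*} [Field F] (h2 : (2 : F) ≠ 0) (h3 : (3 : F) ≠ 0)
    {Z : Type*} [CommRing Z] [Algebra F Z]
(D : Z →ₗ[F] Z)
    (hD : ∀ a b : Z, D (a * b) = D a * b + a * D b)
    (hD0 : D ≠ 0)
    (hker : ∀ a : Z, D a = 0 → ∃ c : F, a = algebraMap F Z c)
    (φ : Z × Z →ₗ[F] Z × Z)
    (hder : ∀ x y : Z × Z, φ (vmul D x y) = (2 : F) • (vmul D (φ x) y + vmul D x (φ y))) :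
    φ = 0 := by
  have hφ : IsDeltaDerivation D 2 φ := hder
  exact LinearMap.prod_ext (LinearMap.ext (hφ.map_even h2 h3 hD hD0 hker))
    (LinearMap.ext (hφ.map_odd h2 h3))

/-- (char F ∉ {2,3})  Every 2-derivation of `V_{1/2}(Z,D)` is zero. -/
theorem two_derivation_of_V_is_zero
    {F : Type*} [Field F] (h2 : (2 : F) ≠ 0) (h3 : (3 : F) ≠ 0)
    {Z : Type*} [CommRing Z] [Algebra F Z]
(D : Z →ₗ[F] Z)
    (hD : ∀ a b : Z, D (a * b) = D a * b + a * D b)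
    (hD0 : D ≠ 0)
    (hsimple : ∀ I : Ideal Z, (∀ x ∈ I, D x ∈ I) → I = ⊥ ∨ I = ⊤)
    (hker : ∀ a : Z, D a = 0 → ∃ c : F, a = algebraMap F Z c)
    (φ : Z × Z →ₗ[F] Z × Z)
    (hder : ∀ x y : Z × Z, φ (vmul D x y) = (2 : F) • (vmul D (φ x) y + vmul D x (φ y))) :
    φ = 0 :=
  two_derivation_of_V_is_zero_general h2 h3 D hD hD0 hker φ hder
end
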